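/- Let B = (N, j, θ) be a G-bundle over a commutative partial monoid M, M' ⊆ M a sub partial monoid, and r' : M' → N' a right splitting of the restricted bundle. Then r' extends to a global right splitting r : M → N if and only if the cohomology class μ(r') := [Δη] ∈ H²(M, M'; G) vanishes, where η is any set-theoretic section of j extending r'. -/

import Mathlib

/-- A commutative partial monoid: a partially defined (via `Option`) commutative,
associative addition with an identity element. -/
structure PCM (M : Type*) where
  padd : M → M → Option M
  zero : M
  comm : ∀ a b, padd a b = padd b a
  zero_add : ∀ a, padd zero a = some a
  assoc_eq : ∀ a b c ab bc abc abc', padd a b = some ab → padd b c = some bc →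
    padd ab c = some abc → padd a bc = some abc' → abc = abc'
  assoc_def : ∀ a b c ab ac bc, padd a b = some ab → padd a c = some ac →
    padd b c = some bc → (padd ab c).isSome ∧ (padd a bc).isSome

/-- A commutative group regarded as a (total) commutative partial monoid. -/
def PCM.ofAddCommGroup (G : Type*) [AddCommGroup G] : PCM G where
  padd a b := some (a + b)
  zero := 0
  comm a b := by rw [add_comm]
  zero_add a := by rw [_root_.zero_add]
  assoc_eq a b c ab bc abc abc' h1 h2 h3 h4 := by
    simp only [Option.some.injEq] at h1 h2 h3 h4
    subst h1; subst h2; subst h3; subst h4; exact add_assoc a b c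
  assoc_def a b c ab ac bc _ _ _ := ⟨rfl, rfl⟩

/-- A homomorphism of commutative partial monoids: preserves the identity and all
defined sums. -/
def PCM.IsHom {M N : Type*} (P : PCM M) (Q : PCM N) (h : M → N) : Prop :=
  h P.zero = Q.zero ∧ ∀ a b ab, P.padd a b = some ab → Q.padd (h a) (h b) = some (h ab)

/-- A compatible action of a commutative group `G` on a commutative partial monoid:
a group action which is a homomorphism `G × M → M` of partial monoids. -/
structure PCMAction {M : Type*} (G : Type*) [AddCommGroup G] (P : PCM M) where
  θ : G → M → M
  act_zero : ∀ m, θ 0 m = m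
  act_add : ∀ g g' m, θ (g + g') m = θ g (θ g' m)
  act_hom : ∀ g g' m m' mm', P.padd m m' = some mm' →
    P.padd (θ g m) (θ g' m') = some (θ (g + g') mm')

/-- A `G`-bundle over a commutative partial monoid `M`: a partial monoid `N` with a
free compatible `G`-action and a surjective homomorphism `j : N → M` whose fibers
are exactly the orbits of the action. -/
structure PCMBundle {M N : Type*} (G : Type*) [AddCommGroup G] (P : PCM M) (Q : PCM N) where
  act : PCMAction G Q
  free : ∀ g g' n, act.θ g n = act.θ g' n → g = g'
  j : N → M
  j_surj : Function.Surjective j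
  j_hom : PCM.IsHom Q P j
  fiber_orbit : ∀ n n', j n = j n' ↔ ∃ g, act.θ g n = n'

variable {M N G : Type*} [AddCommGroup G] {P : PCM M} {Q : PCM N}

/-- A left splitting of a bundle: a homomorphism `l : N → G` intertwining the bundle
action with the translation action of `G` on itself. -/
def PCMBundle.IsLeftSplitting (B : PCMBundle G P Q) (l : N → G) : Prop :=
  Q.IsHom (PCM.ofAddCommGroup G) l ∧ ∀ g n, l (B.act.θ g n) = g + l n

/-- A right splitting of a bundle: a homomorphism `r : M → N` with `j ∘ r = id`. -/
def PCMBundle.IsRightSplitting (B : PCMBundle G P Q) (r : M → N) : Prop :=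
  P.IsHom Q r ∧ ∀ m, B.j (r m) = m

/-- A trivialisation of a bundle: a homomorphism `h : N → G × M` (into the product
bundle) intertwining the actions and satisfying `π₂ ∘ h = j`. -/
def PCMBundle.IsTrivialisation (B : PCMBundle G P Q) (h : N → G × M) : Prop :=
  (h Q.zero = (0, P.zero)) ∧
  (∀ a b ab, Q.padd a b = some ab →
    (h ab).1 = (h a).1 + (h b).1 ∧ P.padd (h a).2 (h b).2 = some ((h ab).2)) ∧
  (∀ g n, h (B.act.θ g n) = (g + (h n).1, (h n).2)) ∧
  (∀ n, (h n).2 = B.j n)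

/-- A local right splitting `r'` of a `G`-bundle over a commutative partial monoid,
defined on a sub partial monoid `M' ⊆ M`, extends to a global right splitting if
and only if its cohomological obstruction vanishes, i.e. iff the 2-cocycle `Δη`
(for any set-theoretic section `η` of `j` extending `r'`) is a relative
coboundary `d¹γ` for some `γ` vanishing on `M'`. -/
theorem local_splitting_extends_iff_obstruction_vanishes (B : PCMBundle G P Q)
    (M' : Set M)
    (hz : P.zero ∈ M')
    (hcl : ∀ a b ab, a ∈ M' → b ∈ M' → P.padd a b = some ab → ab ∈ M')
    (r' : M → N)
    (hr'sec : ∀ m ∈ M', B.j (r' m) = m)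
    (hr'zero : r' P.zero = Q.zero)
    (hr'hom : ∀ a b ab, a ∈ M' → b ∈ M' → P.padd a b = some ab →
      Q.padd (r' a) (r' b) = some (r' ab))
    (η : M → N) (hη : ∀ m, B.j (η m) = m) (hηr : ∀ m ∈ M', η m = r' m)
    (Δ : M → M → G)
    (hΔ : ∀ m₁ m₂ m12, P.padd m₁ m₂ = some m12 →
      ∃ s, Q.padd (η m₁) (η m₂) = some s ∧ η m12 = B.act.θ (Δ m₁ m₂) s) :
    (∃ r : M → N, B.IsRightSplitting r ∧ ∀ m ∈ M', r m = r' m) ↔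
    (∃ γ : M → G, (∀ m ∈ M', γ m = 0) ∧
      ∀ m₁ m₂ m12, P.padd m₁ m₂ = some m12 →
        Δ m₁ m₂ = γ m₂ - γ m12 + γ m₁) := by
  constructor
  · rintro ⟨r, ⟨⟨hrz, hrhom⟩, hrsec⟩, hrr'⟩
    have key : ∀ m, ∃ g, B.act.θ g (η m) = r m := by
      intro m
      exact (B.fiber_orbit (η m) (r m)).mp (by rw [hη, hrsec])
    choose γ hγ using key
    refine ⟨γ, ?_, ?_⟩
    · intro m hm
      have h0 : B.act.θ (0 : G) (η m) = r m := by
        rw [B.act.act_zero, hηr m hm, hrr' m hm]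
      exact (B.free _ _ _ (h0.trans (hγ m).symm)).symm
    · intro m₁ m₂ m12 hpadd
      obtain ⟨s, hs, hs'⟩ := hΔ m₁ m₂ m12 hpadd
      have h1 : Q.padd (r m₁) (r m₂) = some (r m12) := hrhom _ _ _ hpadd
      have h2 : Q.padd (B.act.θ (γ m₁) (η m₁)) (B.act.θ (γ m₂) (η m₂)) =
          some (B.act.θ (γ m₁ + γ m₂) s) := B.act.act_hom _ _ _ _ _ hs
      rw [hγ, hγ, h1] at h2
      have h3 : r m12 = B.act.θ (γ m12 + Δ m₁ m₂) s := by
        rw [B.act.act_add, ← hs', hγ]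
      have h4 := B.free (γ m₁ + γ m₂) (γ m12 + Δ m₁ m₂) s
        (by rw [← (Option.some.injEq _ _).mp h2, h3])
      have h5 : Δ m₁ m₂ = γ m₁ + γ m₂ - γ m12 := by rw [h4]; abel
      rw [h5]; abel
  · rintro ⟨γ, hγ0, hγd⟩
    refine ⟨fun m => B.act.θ (γ m) (η m), ⟨⟨?_, ?_⟩, ?_⟩, ?_⟩
    · show B.act.θ (γ P.zero) (η P.zero) = Q.zero
      rw [hγ0 _ hz, B.act.act_zero, hηr _ hz, hr'zero]
    · intro a b ab hpadd
      obtain ⟨s, hs, hs'⟩ := hΔ a b ab hpadd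
      have h2 : Q.padd (B.act.θ (γ a) (η a)) (B.act.θ (γ b) (η b)) =
          some (B.act.θ (γ a + γ b) s) := B.act.act_hom _ _ _ _ _ hs
      show Q.padd (B.act.θ (γ a) (η a)) (B.act.θ (γ b) (η b)) =
        some (B.act.θ (γ ab) (η ab))
      rw [h2]
      congr 1
      rw [hs', ← B.act.act_add]
      congr 1
      rw [hγd a b ab hpadd]
      abel
    · intro m
      show B.j (B.act.θ (γ m) (η m)) = m
      have : B.j (η m) = B.j (B.act.θ (γ m) (η m)) :=
        (B.fiber_orbit _ _).mpr ⟨γ m, rfl⟩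
      rw [← this, hη]
    · intro m hm
      show B.act.θ (γ m) (η m) = r' m
      rw [hγ0 m hm, B.act.act_zero, hηr m hm]
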